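/- Let π be a k-colored permutation of length n, let P(π) be its insertion tableau, and draw the shadow lines L_1, L_2, ... of the square diagram of π. Then: (1) the row numbers of the X's lying on L_i are exactly the numbers filling the k-ribbons of the i-th column (from the left) of P(π); (2) if L_i passes through a single X^j, then the i-th column of P(π) consists of a single k-ribbon of height j; (3) if L_i passes through two X's, say X^j in the higher row and X^l in the lower row, then the i-th column of P(π) has height 2 and the smaller of the two row numbers fills a k-ribbon of height l stacked on top of a k-ribbon of height k+1−l filled with the larger row number. -/

import Mathlib

namespace KRF

/-- A letter of the alphabet `{1_1, …, 1_k, 2}`:  `one j` stands for the letter `1_j`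
(with `1 ≤ j ≤ k` for genuine letters), and `two` stands for the letter `2`. -/
inductive Letter (k : ℕ) : Type where
  | one : ℕ → Letter k
  | two : Letter k
deriving DecidableEq

/-- A word over the alphabet `{1_1, …, 1_k, 2}`, listed from the leftmost letter to the
rightmost letter. -/
abbrev Word (k : ℕ) := List (Letter k)

/-- The contribution of a letter to the rank: each `1_j` counts `1` and each `2` counts `2`. -/
def Letter.rank {k : ℕ} : Letter k → ℕ
  | .one _ => 1
  | .two => 2

/-- The rank of a word: the sum of its letters. -/
def Word.rank {k : ℕ} (w : Word k) : ℕ := (w.map Letter.rank).sum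

/-- The letter `1_j` is valid when `1 ≤ j ≤ k`. -/
def Letter.Valid (k : ℕ) : Letter k → Prop
  | .one j => 1 ≤ j ∧ j ≤ k
  | .two => True

/-- A genuine word of the Fibonacci poset `Z(k)`: all of its letters are valid. -/
def Word.Valid (k : ℕ) (w : Word k) : Prop := ∀ l ∈ w, l.Valid k

/-- The cover relation of the Fibonacci poset `Z(k)`:  `z` is covered by `w` iff `z` is
obtained from `w` either by changing a `2` into some `1_j` when all letters to the left of
that `2` are `2`'s, or by deleting the leftmost letter of the form `1_j`. -/
def ZCovers (k : ℕ) (z w : Word k) : Prop :=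
  (∃ (p s : Word k) (j : ℕ), (∀ l ∈ p, l = Letter.two) ∧ 1 ≤ j ∧ j ≤ k ∧
      w = p ++ Letter.two :: s ∧ z = p ++ Letter.one j :: s) ∨
  (∃ (p s : Word k) (j : ℕ), (∀ l ∈ p, l = Letter.two) ∧ 1 ≤ j ∧ j ≤ k ∧
      w = p ++ Letter.one j :: s ∧ z = p ++ s)

/-- `c 0 ⋖ c 1 ⋖ ⋯ ⋖ c n` is a saturated chain in `Z(k)` starting at the empty word. -/
def IsZChain (k n : ℕ) (c : ℕ → Word k) : Prop :=
  c 0 = [] ∧ ∀ i, i < n → ZCovers k (c i) (c (i + 1))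

end KRF
namespace KRF

/-- A column of a (tiled and filled) `k`-ribbon Fibonacci tableau.
`single h v` is a column of height 1 (shape letter `1_h`) tiled by one `k`-ribbon of
height `h` filled with the value `v`.
`double ht hb vt vb` is a column of height 2 (shape letter `2`) tiled by a `k`-ribbon of
height `ht` filled with `vt` stacked on top of a `k`-ribbon of height `hb` (always
`hb = k + 1 - ht` for genuine tableaux) filled with `vb`. -/
inductive Col (k : ℕ) : Type where
  | single : ℕ → ℕ → Col k
  | double : ℕ → ℕ → ℕ → ℕ → Col k
deriving DecidableEq

/-- A (tiled, filled) `k`-ribbon Fibonacci tableau: its list of columns, from the leftmost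
column to the rightmost one. -/
abbrev Tab (k : ℕ) := List (Col k)

/-- The shape letter of a column. -/
def Col.shape {k : ℕ} : Col k → Letter k
  | .single h _ => Letter.one h
  | .double _ _ _ _ => Letter.two

/-- The `k`-ribbon Fibonacci shape (a word) underlying a tableau. -/
def Tab.shape {k : ℕ} (T : Tab k) : Word k := T.map Col.shape

/-- The value in the bottom `k`-ribbon of a column. -/
def Col.bottomVal {k : ℕ} : Col k → ℕ
  | .single _ v => v
  | .double _ _ _ vb => vb

/-- The heights occurring in a column are genuine ribbon heights: between `1` and `k`,
and in a column of height 2 the two heights sum to `k + 1`. -/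
def Col.HeightsValid (k : ℕ) : Col k → Prop
  | .single h _ => 1 ≤ h ∧ h ≤ k
  | .double ht hb _ _ => 1 ≤ ht ∧ ht ≤ k ∧ hb = k + 1 - ht

/-- The list of all entries of a tableau (one for each `k`-ribbon). -/
def Tab.entries {k : ℕ} (T : Tab k) : List ℕ :=
  (T.map fun c => match c with
    | Col.single _ v => [v]
    | Col.double _ _ vt vb => [vt, vb]).flatten

/-- The list of the bottom-ribbon values of the columns of a tableau. -/
def Tab.bottoms {k : ℕ} (T : Tab k) : List ℕ := T.map Col.bottomVal

/-- `T` is a standard `k`-ribbon Fibonacci tableau with entries `1, …, n`: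
heights are valid, the entries are exactly `1, …, n`,  and the tableau can be built by
placing `n, n-1, …, 1` in order, each new `k`-ribbon being either appended (as a new
rightmost height-1 column) to the shape formed by the `k`-ribbons containing larger
entries, or stacked on top of a single such `k`-ribbon.  Equivalently (and this is how we
formalize it): the bottom entries strictly decrease from left to right (in particular the
`k`-ribbon containing the leftmost square of the bottom row contains `n`), and in each
column of height 2 the top entry is smaller than the bottom entry. -/
def IsStandardTab (k n : ℕ) (T : Tab k) : Prop :=
  (∀ c ∈ T, Col.HeightsValid k c) ∧
  (Tab.entries T).Perm (List.range' 1 n) ∧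
  List.Chain' (fun a b => b < a) (Tab.bottoms T) ∧
  (∀ c ∈ T, ∀ ht hb vt vb, c = Col.double ht hb vt vb → vt < vb)

/-- Updating a (partial) path tableau along one cover step `z ⋖ w` of `Z(k)`, placing the
value `i` in the `k` new squares of `w` relative to `z`:  if `w` is obtained from `z` by
inserting a letter `1_j` after the prefix of `2`'s, a new height-1 column with a single
ribbon of height `j` filled with `i` is created there; if `w` is obtained from `z` by
changing the letter `1_h` just after the prefix of `2`'s into a `2`, the `k` new squares
of that column form a `k`-ribbon of height `k + 1 - h` filled with `i`, stacked on top of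
the already present `k`-ribbon of height `h`. -/
def updateTab (k : ℕ) (i : ℕ) : Word k → Word k → Tab k → Tab k
  | Letter.two :: z', Letter.two :: w', c :: T => c :: updateTab k i z' w' T
  | Letter.one h :: _, Letter.two :: _, Col.single _ v :: T =>
      Col.double (k + 1 - h) h i v :: T
  | z, Letter.one j :: w', T => if z = w' then Col.single j i :: T else T
  | _, _, T => T

/-- The `k`-ribbon Fibonacci path tableau determined by a saturated chain in `Z(k)`:
for each `i = 1, …, n` the value `i` is placed in the `k` new squares of `c i` relative
to `c (i-1)`. -/
def chainTab (k : ℕ) (c : ℕ → Word k) : ℕ → Tab k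
  | 0 => []
  | m + 1 => updateTab k (m + 1) (c m) (c (m + 1)) (chainTab k c m)

/-- `T` is a `k`-ribbon Fibonacci path tableau with entries `1, …, n`: it is obtained
from some saturated chain `∅ = c 0 ⋖ c 1 ⋖ ⋯ ⋖ c n` in `Z(k)` by placing `i`'s in the
`k` new squares created at the `i`-th step. -/
def IsPathTab (k n : ℕ) (T : Tab k) : Prop :=
  ∃ c : ℕ → Word k, IsZChain k n c ∧ T = chainTab k c n

end KRF
namespace KRF

/-- A `k`-colored permutation of length `n`: a permutation `x_1 x_2 ⋯ x_n` of `{1, …, n}`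
(here `x_i = perm i + 1`, using `Fin n` positions and values) together with a color
`color i ∈ {1, …, k}` attached to each entry. -/
structure ColoredPerm (n k : ℕ) : Type where
  perm : Equiv.Perm (Fin n)
  color : Fin n → ℕ
  color_pos : ∀ i, 1 ≤ color i
  color_le : ∀ i, color i ≤ k

/-- Insertion of a value `x` of color `j` into a `k`-ribbon Fibonacci tableau: compare `x`
with the value `t` in the `k`-ribbon containing the leftmost square of the bottom row.
If the tableau is empty or `x > t`, a new leftmost height-1 column consisting of a single
`k`-ribbon of height `j` filled with `x` is created.  If `x < t`, a `k`-ribbon of height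
`j` filled with `x` is placed on top of the `k`-ribbon containing `t` (which is forced to
become a `k`-ribbon of height `k + 1 - j`); if a `k`-ribbon of height `l` filled with `b`
was already on top of the ribbon containing `t`, it is bumped out and the value `b` with
color `l` is inserted recursively into the tableau formed by the columns to the right. -/
def insertVal (k : ℕ) (x j : ℕ) : Tab k → Tab k
  | [] => [Col.single j x]
  | c :: rest =>
    if Col.bottomVal c < x then Col.single j x :: c :: rest
    else
      match c with
      | Col.single _ v => Col.double j (k + 1 - j) x v :: rest
      | Col.double ht _ vt vb => Col.double j (k + 1 - j) x vb :: insertVal k vt ht rest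

/-- The insertion tableau obtained after inserting the first `i` colored entries
`x_1^{j_1}, …, x_i^{j_i}` of the `k`-colored permutation `π` into the empty tableau. -/
def PPartial (k n : ℕ) (π : ColoredPerm n k) (i : ℕ) : Tab k :=
  ((List.finRange n).take i).foldl
    (fun T m => insertVal k ((π.perm m : ℕ) + 1) (π.color m) T) []

/-- The insertion tableau `P(π)` of a `k`-colored permutation. -/
def PTab (k n : ℕ) (π : ColoredPerm n k) : Tab k := PPartial k n π n

/-- The chain of shapes of the partial insertion tableaux of `π`. -/
def QChain (k n : ℕ) (π : ColoredPerm n k) (i : ℕ) : Word k :=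
  Tab.shape (PPartial k n π i)

/-- The recording tableau `Q(π)`: it has the same shape as `P(π)`, and after the `i`-th
insertion the value `i` is placed in the `k` squares by which the shape grew at step `i`. -/
def QTab (k n : ℕ) (π : ColoredPerm n k) : Tab k := chainTab k (QChain k n π) n

end KRF
namespace KRF

/-- The recursive construction of the shadow lines of a square diagram, applied to the set
`S` of the positions of the `X`'s not lying on a previously drawn line.  Each line is
recorded as the pair `(i₁, i₂)` where `i₁` is the position (column) of the highest
remaining `X` and `i₂` is the rightmost remaining column containing an `X`; the line
passes through these one or two `X`'s, which are then removed. -/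
def shadowAux (n : ℕ) (p : Equiv.Perm (Fin n)) (S : Finset (Fin n)) :
    List (Fin n × Fin n) :=
  if h : S.Nonempty then
    (p.symm ((S.image p).max' (h.image p)), S.max' h) ::
      shadowAux n p ((S.erase (p.symm ((S.image p).max' (h.image p)))).erase (S.max' h))
  else []
termination_by S.card
decreasing_by
  have h1 : p.symm ((S.image p).max' (h.image p)) ∈ S := by
    obtain ⟨a, ha, hpa⟩ := Finset.mem_image.mp (Finset.max'_mem (S.image p) (h.image p))
    simpa [← hpa] using ha
  calc ((S.erase (p.symm ((S.image p).max' (h.image p)))).erase (S.max' h)).card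
      ≤ (S.erase (p.symm ((S.image p).max' (h.image p)))).card := Finset.card_erase_le
    _ < S.card := Finset.card_erase_lt_of_mem h1

/-- The list of shadow lines `L₁, L₂, …` of the square diagram of the `k`-colored
permutation `π`.  The `s`-th entry is the pair `(i₁, i₂)` of positions of the `X`'s
through which `L_s` passes: `i₁` is the column of the highest `X` on the line and `i₂` is
the rightmost column of an `X` on the line (the line passes through a single `X` exactly
when `i₁ = i₂`; when `i₁ ≠ i₂` the `X` in column `i₁` is the leftmost, higher one). -/
def shadowLines {n k : ℕ} (π : ColoredPerm n k) : List (Fin n × Fin n) :=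
  shadowAux n π.perm Finset.univ

end KRF

/-!
The highest `X` carries the largest value inserted so far, so it starts a new leftmost
column; every later entry is smaller, hence is stacked on that column and bumps the previous
top ribbon into the columns to the right. So the first column of `P(π)` is made of the highest
`X` and the rightmost `X`, and the remaining columns are the insertion tableau of the other
entries in their original order: this is exactly the recursion defining the shadow lines.
-/

theorem Finset.exists_sort_eq_append_cons {α : Type*} [LinearOrder α] {S : Finset α}
    {a : α} (ha : a ∈ S) : ∃ A B, S.sort = A ++ a :: B ∧ (S.erase a).sort = A ++ B := by
  obtain ⟨A, B, hAB⟩ := List.append_of_mem ((Finset.mem_sort (· ≤ ·)).2 ha)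
  have hnd : (A ++ a :: B).Nodup := hAB ▸ S.sort_nodup _
  have haA : a ∉ A := fun h => List.disjoint_of_nodup_append hnd h List.mem_cons_self
  have hsort : (S.erase a).sort = S.sort.erase a :=
    (S.erase a).sortedLT_sort.eq_of_mem_iff
      (S.sortedLT_sort.pairwise.sublist List.erase_sublist).sortedLT fun b => by
        rw [(S.sort_nodup _).mem_erase_iff, Finset.mem_sort, Finset.mem_sort, Finset.mem_erase]
  exact ⟨A, B, hAB, by rw [hsort, hAB, List.erase_append_right _ haA, List.erase_cons_head]⟩

theorem Finset.sort_eq_sort_erase_max'_append {α : Type*} [LinearOrder α]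
    {S : Finset α} (h : S.Nonempty) : S.sort = (S.erase (S.max' h)).sort ++ [S.max' h] := by
  obtain ⟨A, B, hAB, hsort⟩ := Finset.exists_sort_eq_append_cons (S.max'_mem h)
  obtain rfl : B = [] := List.eq_nil_iff_forall_not_mem.2 fun b hb => by
    have hlt := List.rel_of_pairwise_cons
      (List.pairwise_append.1 (hAB ▸ S.sortedLT_sort.pairwise)).2.1 hb
    have hbS : b ∈ S := (Finset.mem_sort (· ≤ ·)).1 (by rw [hAB]; simp [hb])
    exact (S.le_max' b hbS).not_gt hlt
  rw [hAB, hsort, List.append_nil]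

theorem Equiv.symm_max'_image_mem {α β : Type*} [LinearOrder β] (e : α ≃ β)
    {S : Finset α} (h : S.Nonempty) : e.symm ((S.image e).max' (h.image e)) ∈ S := by
  obtain ⟨a, ha, hea⟩ := Finset.mem_image.1 ((S.image e).max'_mem (h.image e))
  simpa [← hea] using ha

theorem Equiv.apply_lt_max'_image {α β : Type*} [LinearOrder β] (e : α ≃ β)
    {S : Finset α} (h : S.Nonempty) {a : α} (ha : a ∈ S)
    (hne : a ≠ e.symm ((S.image e).max' (h.image e))) : e a < (S.image e).max' (h.image e) :=
  ((S.image e).le_max' _ (Finset.mem_image_of_mem e ha)).lt_of_ne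
    fun hea => hne (e.eq_symm_apply.2 hea)

namespace KRF

def insertList (k : ℕ) (T : Tab k) (w : List (ℕ × ℕ)) : Tab k :=
  w.foldl (fun T q => insertVal k q.1 q.2 T) T

theorem insertList_append (k : ℕ) (T : Tab k) (v w : List (ℕ × ℕ)) :
    insertList k T (v ++ w) = insertList k (insertList k T v) w :=
  List.foldl_append

def Col.bumped {k : ℕ} : Col k → List (ℕ × ℕ)
  | .single _ _ => []
  | .double ht _ vt _ => [(vt, ht)]

theorem entries_insertVal_perm (k x j : ℕ) (T : Tab k) :
    (insertVal k x j T).entries.Perm (x :: T.entries) := by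
  induction T generalizing x j with
  | nil => rfl
  | cons c rest ih =>
    simp only [insertVal]
    split_ifs
    · rfl
    · cases c with
      | single h v => simp [Tab.entries]
      | double ht hb vt vb =>
        simp only [Tab.entries, List.map_cons, List.flatten_cons, List.cons_append,
          List.nil_append]
        exact .cons _ <| .trans (.cons _ (ih vt ht)) (.swap _ _ _)

theorem entries_insertList_perm (k : ℕ) (T : Tab k) (w : List (ℕ × ℕ)) :
    (insertList k T w).entries.Perm (w.map Prod.fst ++ T.entries) := by
  induction w generalizing T with
  | nil => rfl
  | cons q w ih =>
    exact (ih _).trans <| ((entries_insertVal_perm k q.1 q.2 T).append_left _).trans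
      List.perm_middle

theorem insertVal_of_forall_lt (k x j : ℕ) (T : Tab k) (h : ∀ v ∈ T.entries, v < x) :
    insertVal k x j T = Col.single j x :: T := by
  cases T with
  | nil => rfl
  | cons c R =>
    have hc : c.bottomVal < x := h _ (by cases c <;> simp [Tab.entries, Col.bottomVal])
    simp [insertVal, hc]

theorem insertVal_cons_of_le (k x j : ℕ) (c : Col k) (R : Tab k) (h : x ≤ c.bottomVal) :
    insertVal k x j (c :: R) =
      Col.double j (k + 1 - j) x c.bottomVal :: insertList k R c.bumped := by
  cases c <;> simp only [Col.bottomVal] at h <;>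
    simp [insertVal, insertList, Col.bumped, Col.bottomVal, not_lt.2 h]

/-- Each entry stacked on the first column bumps the previous top ribbon to the right;
only the last one stays. -/
theorem insertList_cons_append_singleton (k y d : ℕ) (c : Col k) (R : Tab k)
    (w : List (ℕ × ℕ)) (hw : ∀ q ∈ w, q.1 ≤ c.bottomVal) (hy : y ≤ c.bottomVal) :
    insertList k (c :: R) (w ++ [(y, d)]) =
      Col.double d (k + 1 - d) y c.bottomVal :: insertList k R (c.bumped ++ w) := by
  induction w generalizing c R with
  | nil => simpa [insertList] using insertVal_cons_of_le k y d c R hy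
  | cons q w ih =>
    have hq := hw q List.mem_cons_self
    rw [List.cons_append, insertList, List.foldl_cons, ← insertList,
      insertVal_cons_of_le k _ _ c R hq,
      ih (Col.double _ _ _ c.bottomVal) _ (fun q' hq' => hw q' (List.mem_cons_of_mem _ hq')) hy]
    simp only [Col.bumped, Col.bottomVal, insertList_append]
    rfl

theorem insertList_append_max (k x c : ℕ) (A : List (ℕ × ℕ)) (hA : ∀ q ∈ A, q.1 < x) :
    insertList k [] (A ++ [(x, c)]) = Col.single c x :: insertList k [] A := by
  rw [insertList_append]
  refine insertVal_of_forall_lt k x c _ fun v hv => ?_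
  have := (entries_insertList_perm k [] A).subset hv
  simp only [Tab.entries, List.map_nil, List.flatten_nil, List.append_nil, List.mem_map] at this
  obtain ⟨q, hq, rfl⟩ := this
  exact hA q hq

theorem insertList_append_max_append (k x c y d : ℕ) (A B : List (ℕ × ℕ))
    (hA : ∀ q ∈ A, q.1 < x) (hB : ∀ q ∈ B, q.1 ≤ x) (hy : y ≤ x) :
    insertList k [] (A ++ (x, c) :: (B ++ [(y, d)])) =
      Col.double d (k + 1 - d) y x :: insertList k [] (A ++ B) := by
  rw [← List.singleton_append, ← List.append_assoc, insertList_append _ _ (A ++ _),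
    insertList_append_max k x c A hA]
  rw [insertList_cons_append_singleton k y d (Col.single c x) _ B hB hy,
    insertList_append k [] A B]
  rfl

def shadowLineCol (k : ℕ) {n : ℕ} (p : Equiv.Perm (Fin n)) (col : Fin n → ℕ)
    (q : Fin n × Fin n) : Col k :=
  if q.1 = q.2 then Col.single (col q.1) ((p q.1 : ℕ) + 1)
  else Col.double (col q.2) (k + 1 - col q.2) ((p q.2 : ℕ) + 1) ((p q.1 : ℕ) + 1)

theorem insertList_sort_eq_map_shadowAux (k n : ℕ) (p : Equiv.Perm (Fin n))
    (col : Fin n → ℕ) (S : Finset (Fin n)) :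
    insertList k [] (S.sort.map fun i => ((p i : ℕ) + 1, col i)) =
      (shadowAux n p S).map (shadowLineCol k p col) := by
  induction S using Finset.strongInduction with
  | _ S ih =>
  rcases S.eq_empty_or_nonempty with rfl | hS
  · simp [shadowAux, insertList]
  rw [shadowAux, dif_pos hS, List.map_cons]
  have hm₁S := p.symm_max'_image_mem hS
  have hlt : ∀ i ∈ S.erase (p.symm ((S.image p).max' (hS.image p))),
      (p i : ℕ) + 1 < (p (p.symm ((S.image p).max' (hS.image p))) : ℕ) + 1 := fun i hi => by
    rw [p.apply_symm_apply]
    exact Nat.succ_lt_succ (p.apply_lt_max'_image hS (Finset.mem_of_mem_erase hi)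
      (Finset.ne_of_mem_erase hi))
  have ih_rest := ih ((S.erase _).erase (S.max' hS))
    ((Finset.erase_subset _ _).trans_ssubset (Finset.erase_ssubset hm₁S))
  generalize p.symm ((S.image p).max' (hS.image p)) = m₁ at *
  rw [Finset.sort_eq_sort_erase_max'_append hS]
  by_cases hm : m₁ = S.max' hS
  · rw [← hm, Finset.erase_idem] at ih_rest ⊢
    rw [List.map_append, List.map_singleton, insertList_append_max, ih_rest]
    · simp [shadowLineCol]
    · exact List.forall_mem_map.2 fun i hi => hlt i ((Finset.mem_sort (· ≤ ·)).1 hi)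
  · obtain ⟨A, B, hAB, hsort⟩ :=
      Finset.exists_sort_eq_append_cons (Finset.mem_erase.2 ⟨hm, hm₁S⟩)
    rw [Finset.erase_right_comm] at hsort
    rw [hsort] at ih_rest
    have hsmall : ∀ i ∈ A ++ B, (p i : ℕ) + 1 < (p m₁ : ℕ) + 1 := fun i hi =>
      hlt i (Finset.mem_of_mem_erase ((Finset.mem_sort (· ≤ ·)).1 (hsort ▸ hi)))
    rw [hAB]
    simp only [List.map_append, List.map_cons, List.map_nil, List.append_assoc, List.cons_append]
    rw [insertList_append_max_append, ← List.map_append, ih_rest, shadowLineCol, if_neg hm]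
    · exact List.forall_mem_map.2 fun i hi => hsmall i (List.mem_append_left _ hi)
    · exact List.forall_mem_map.2 fun i hi => (hsmall i (List.mem_append_right _ hi)).le
    · exact (hlt _ (Finset.mem_erase.2 ⟨Ne.symm hm, S.max'_mem hS⟩)).le

theorem PTab_eq_map_shadowLines (k n : ℕ) (π : ColoredPerm n k) :
    PTab k n π = (shadowLines π).map (shadowLineCol k π.perm π.color) := by
  rw [shadowLines, ← insertList_sort_eq_map_shadowAux, Fin.sort_univ, insertList, List.foldl_map,
    PTab, PPartial, List.take_of_length_le (List.length_finRange).le]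

theorem shadowLines_determine_PTab_general (k n : ℕ) (π : ColoredPerm n k) :
    (PTab k n π).length = (shadowLines π).length ∧
    ∀ (i : ℕ) (i₁ i₂ : Fin n), (shadowLines π)[i]? = some (i₁, i₂) →
      (i₁ = i₂ →
        (PTab k n π)[i]? = some (Col.single (π.color i₁) ((π.perm i₁ : ℕ) + 1))) ∧
      (i₁ ≠ i₂ →
        (PTab k n π)[i]? = some (Col.double (π.color i₂) (k + 1 - π.color i₂)
          ((π.perm i₂ : ℕ) + 1) ((π.perm i₁ : ℕ) + 1))) := by
  rw [PTab_eq_map_shadowLines]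
  refine ⟨List.length_map _, fun i i₁ i₂ hi => ?_⟩
  simp only [List.getElem?_map, hi, Option.map_some, shadowLineCol]
  exact ⟨fun h => by simp [h], fun h => by simp [h]⟩

/-- The shadow lines `L₁, L₂, …` of the square diagram of a `k`-colored
permutation `π` determine the insertion tableau `P(π)`:  (1) the row numbers of the `X`'s
lying on `L_i` are exactly the entries of the `k`-ribbons of the `i`-th column (from the
left) of `P(π)`; (2) if `L_i` passes through a single `X^j`, the `i`-th column of `P(π)`
consists of a single `k`-ribbon of height `j` (filled with that row number); (3) if `L_i`
passes through two `X`'s, say `X^j` in the higher row and `X^l` in the lower row, then the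
`i`-th column has height 2 and the smaller row number fills a `k`-ribbon of height `l`
stacked on top of a `k`-ribbon of height `k + 1 − l` filled with the larger row number. -/
theorem shadowLines_determine_PTab (k n : ℕ) (hk : 1 ≤ k) (π : ColoredPerm n k) :
    (PTab k n π).length = (shadowLines π).length ∧
    ∀ (i : ℕ) (i₁ i₂ : Fin n), (shadowLines π)[i]? = some (i₁, i₂) →
      (i₁ = i₂ →
        (PTab k n π)[i]? = some (Col.single (π.color i₁) ((π.perm i₁ : ℕ) + 1))) ∧
      (i₁ ≠ i₂ →
        (PTab k n π)[i]? = some (Col.double (π.color i₂) (k + 1 - π.color i₂)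
          ((π.perm i₂ : ℕ) + 1) ((π.perm i₁ : ℕ) + 1))) :=
  shadowLines_determine_PTab_general k n π

end KRF
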